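/- Let (Ω, P) be a probability space, let d ≥ 1 be a natural number, let γ be a real with 0 < γ < 1, let G ≥ 0, and let (X_n)_{n∈ℕ} be Bochner integrable random vectors X_n : Ω → ℝ^d satisfying ‖X_n(ω)‖ ≤ G·(n+1)·γ^n for almost every ω and every n. Set Ŝ_N := ∑_{n=0}^{N-1} X_n and μ := ∑_{n=0}^∞ E[X_n] (the latter series converges absolutely). Then for every natural number N, E[‖Ŝ_N − μ‖] ≤ √d·G/(1-γ)² + G·((N+1)/(1-γ) + γ/(1-γ)²)·γ^N. -/

import Mathlib

open MeasureTheory ProbabilityTheory Finset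

/-!
Write `Ŝ_N - μ = (Ŝ_N - E Ŝ_N) + (E Ŝ_N - μ)`. The bias `E Ŝ_N - μ = -∑_{n ≥ N} E X_n` is bounded
termwise by the tail `∑_k G (k + N + 1) γ^(k+N)`, which sums to the stated bias term. For the
fluctuation, in a Hilbert space `(E‖Y - E Y‖)² ≤ E‖Y - E Y‖² = E‖Y‖² - ‖E Y‖² ≤ E‖Y‖²`, and
`‖Ŝ_N‖ ≤ ∑_{n<N} G (n + 1) γ^n ≤ G / (1 - γ)² ≤ √d G / (1 - γ)²` almost surely.
-/

section Geometric

variable {𝕜 : Type*} [NormedField 𝕜] {r : 𝕜}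

lemma hasSum_succ_mul_geometric (hr : ‖r‖ < 1) :
    HasSum (fun n : ℕ => ((n : 𝕜) + 1) * r ^ n) (1 / (1 - r) ^ 2) := by
  simpa using hasSum_choose_mul_geometric_of_norm_lt_one 1 hr

lemma hasSum_succ_mul_geometric_nat_add (hr : ‖r‖ < 1) (N : ℕ) :
    HasSum (fun k : ℕ => (((k + N : ℕ) : 𝕜) + 1) * r ^ (k + N))
      (((N + 1) / (1 - r) + r / (1 - r) ^ 2) * r ^ N) := by
  have hr1 : 1 - r ≠ 0 := sub_ne_zero.2 (fun h => by simp [← h] at hr)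
  have hsum := ((hasSum_succ_mul_geometric hr).add
    ((hasSum_geometric_of_norm_lt_one hr).mul_left (N : 𝕜))).mul_right (r ^ N)
  rw [show ((N + 1) / (1 - r) + r / (1 - r) ^ 2) * r ^ N
      = (1 / (1 - r) ^ 2 + N * (1 - r)⁻¹) * r ^ N by field_simp; ring]
  refine hsum.congr_fun fun k => ?_
  push_cast
  ring

end Geometric

section Moments

variable {Ω : Type*} [MeasurableSpace Ω] {μ : Measure Ω} [IsProbabilityMeasure μ]
  {F : Type*} [NormedAddCommGroup F] [NormedSpace ℝ F] {a : ℕ → ℝ}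

lemma norm_integral_le_of_ae_norm_le {f : Ω → F} {c : ℝ} (hf : ∀ᵐ ω ∂μ, ‖f ω‖ ≤ c) :
    ‖∫ ω, f ω ∂μ‖ ≤ c := by
  simpa using norm_integral_le_of_norm_le_const hf

lemma summable_norm_integral {X : ℕ → Ω → F} (ha : Summable a) (hX : ∀ n, ∀ᵐ ω ∂μ, ‖X n ω‖ ≤ a n) :
    Summable fun n => ‖∫ ω, X n ω ∂μ‖ :=
  ha.of_nonneg_of_le (fun _ => norm_nonneg _) fun n => norm_integral_le_of_ae_norm_le (hX n)

lemma norm_tsum_integral_sub_sum_le [CompleteSpace F] {X : ℕ → Ω → F} (ha : Summable a)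
    (hX : ∀ n, ∀ᵐ ω ∂μ, ‖X n ω‖ ≤ a n) (N : ℕ) :
    ‖∑' n, ∫ ω, X n ω ∂μ - ∑ n ∈ range N, ∫ ω, X n ω ∂μ‖ ≤ ∑' k, a (k + N) := by
  rw [← (summable_norm_integral ha hX).of_norm.sum_add_tsum_nat_add N, add_sub_cancel_left]
  exact tsum_of_norm_bounded ((summable_nat_add_iff N).2 ha).hasSum
    fun k => norm_integral_le_of_ae_norm_le (hX (k + N))

lemma sq_integral_le_integral_sq {f : Ω → ℝ} (hf : MemLp f 2 μ) :
    (∫ ω, f ω ∂μ) ^ 2 ≤ ∫ ω, f ω ^ 2 ∂μ := by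
  have := variance_nonneg f μ
  rw [variance_eq_sub hf] at this
  simpa using this

variable {E : Type*} [NormedAddCommGroup E] [InnerProductSpace ℝ E] [CompleteSpace E]

lemma integral_norm_sub_integral_sq {Y : Ω → E} (hY : MemLp Y 2 μ) :
    ∫ ω, ‖Y ω - ∫ ω', Y ω' ∂μ‖ ^ 2 ∂μ = ∫ ω, ‖Y ω‖ ^ 2 ∂μ - ‖∫ ω, Y ω ∂μ‖ ^ 2 := by
  set m := ∫ ω, Y ω ∂μ
  have hY1 : Integrable Y μ := hY.integrable one_le_two
  have hsq : Integrable (fun ω => ‖Y ω‖ ^ 2) μ := hY.integrable_norm_pow two_ne_zero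
  have hinner : Integrable (fun ω => 2 * inner ℝ m (Y ω)) μ := (hY1.const_inner m).const_mul 2
  simp_rw [norm_sub_sq_real, real_inner_comm m]
  have hdiff : Integrable (fun ω => ‖Y ω‖ ^ 2 - 2 * inner ℝ m (Y ω)) μ := hsq.sub hinner
  rw [integral_add hdiff (integrable_const _), integral_sub hsq hinner,
    integral_const_mul, integral_inner hY1, real_inner_self_eq_norm_sq]
  simp only [integral_const, probReal_univ, smul_eq_mul, one_mul]
  ring

lemma integral_norm_sub_integral_le_sqrt {Y : Ω → E} (hY : MemLp Y 2 μ) :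
    ∫ ω, ‖Y ω - ∫ ω', Y ω' ∂μ‖ ∂μ ≤ √(∫ ω, ‖Y ω‖ ^ 2 ∂μ) := by
  apply Real.le_sqrt_of_sq_le
  calc (∫ ω, ‖Y ω - ∫ ω', Y ω' ∂μ‖ ∂μ) ^ 2
      ≤ ∫ ω, ‖Y ω - ∫ ω', Y ω' ∂μ‖ ^ 2 ∂μ :=
        sq_integral_le_integral_sq (hY.sub (memLp_const _)).norm
    _ = ∫ ω, ‖Y ω‖ ^ 2 ∂μ - ‖∫ ω, Y ω ∂μ‖ ^ 2 := integral_norm_sub_integral_sq hY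
    _ ≤ ∫ ω, ‖Y ω‖ ^ 2 ∂μ := sub_le_self _ (sq_nonneg _)

lemma integral_norm_sub_integral_le_of_ae_norm_le {Y : Ω → E} (hY : AEStronglyMeasurable Y μ)
    {B : ℝ} (hB : ∀ᵐ ω ∂μ, ‖Y ω‖ ≤ B) :
    ∫ ω, ‖Y ω - ∫ ω', Y ω' ∂μ‖ ∂μ ≤ B := by
  obtain ⟨ω, hω⟩ := hB.exists
  have hB0 : 0 ≤ B := (norm_nonneg _).trans hω
  have hY2 : MemLp Y 2 μ := MemLp.of_bound hY B hB
  have hsq : ∫ ω, ‖Y ω‖ ^ 2 ∂μ ≤ B ^ 2 := by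
    simpa using integral_mono_ae (hY2.integrable_norm_pow two_ne_zero) (integrable_const (B ^ 2))
      (hB.mono fun ω h => pow_le_pow_left₀ (norm_nonneg _) h 2)
  calc ∫ ω, ‖Y ω - ∫ ω', Y ω' ∂μ‖ ∂μ ≤ √(∫ ω, ‖Y ω‖ ^ 2 ∂μ) :=
        integral_norm_sub_integral_le_sqrt hY2
    _ ≤ √(B ^ 2) := Real.sqrt_le_sqrt hsq
    _ = B := Real.sqrt_sq hB0

lemma integral_norm_sum_sub_tsum_integral_le {X : ℕ → Ω → E} {a : ℕ → ℝ}
    (hint : ∀ n, Integrable (X n) μ) (ha : Summable a)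
    (hX : ∀ n, ∀ᵐ ω ∂μ, ‖X n ω‖ ≤ a n) (N : ℕ) :
    ∫ ω, ‖∑ n ∈ range N, X n ω - ∑' n, ∫ ω', X n ω' ∂μ‖ ∂μ ≤
      ∑ n ∈ range N, a n + ∑' k, a (k + N) := by
  set S : Ω → E := fun ω => ∑ n ∈ range N, X n ω
  set m := ∑' n, ∫ ω, X n ω ∂μ
  have hS : Integrable S μ := integrable_finsetSum _ fun n _ => hint n
  have hES : ∫ ω, S ω ∂μ = ∑ n ∈ range N, ∫ ω, X n ω ∂μ := integral_finsetSum _ fun n _ => hint n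
  have hS_bd : ∀ᵐ ω ∂μ, ‖S ω‖ ≤ ∑ n ∈ range N, a n := by
    filter_upwards [ae_all_iff.2 hX] with ω hω
    exact (norm_sum_le _ _).trans (sum_le_sum fun n _ => hω n)
  have hcentered := integral_norm_sub_integral_le_of_ae_norm_le hS.aestronglyMeasurable hS_bd
  have hbias : ‖∫ ω, S ω ∂μ - m‖ ≤ ∑' k, a (k + N) := by
    rw [norm_sub_rev, hES]
    exact norm_tsum_integral_sub_sum_le ha hX N
  have hcentered_int : Integrable (fun ω => ‖S ω - ∫ ω', S ω' ∂μ‖) μ :=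
    (hS.sub (integrable_const _)).norm
  calc ∫ ω, ‖S ω - m‖ ∂μ ≤ ∫ ω, (‖S ω - ∫ ω', S ω' ∂μ‖ + ‖∫ ω', S ω' ∂μ - m‖) ∂μ :=
        integral_mono (hS.sub (integrable_const _)).norm
          (hcentered_int.add (integrable_const _)) fun ω => norm_sub_le_norm_sub_add_norm_sub ..
    _ = ∫ ω, ‖S ω - ∫ ω', S ω' ∂μ‖ ∂μ + ‖∫ ω', S ω' ∂μ - m‖ := by
        rw [integral_add hcentered_int (integrable_const _)]
        simp
    _ ≤ ∑ n ∈ range N, a n + ∑' k, a (k + N) := add_le_add hcentered hbias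

end Moments

/-- First-moment error bound for the truncated estimator: if `X n` are integrable random
vectors in `ℝ^d` with `‖X n ω‖ ≤ G·(n+1)·γ^n` almost surely, `Ŝ_N := ∑_{n<N} X n` and
`μ := ∑_{n=0}^∞ E[X n]` (absolutely convergent), then
`E[‖Ŝ_N − μ‖] ≤ √d·G/(1-γ)² + G·((N+1)/(1-γ) + γ/(1-γ)²)·γ^N`. -/
theorem stmt_6 (d : ℕ) (hd : 1 ≤ d) {Ω : Type*} [MeasurableSpace Ω] (P : Measure Ω)
    [IsProbabilityMeasure P] (γ G : ℝ) (h0 : 0 < γ) (h1 : γ < 1) (hG : 0 ≤ G)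
    (X : ℕ → Ω → EuclideanSpace ℝ (Fin d))
    (hint : ∀ n : ℕ, Integrable (X n) P)
    (hbd : ∀ n : ℕ, ∀ᵐ ω ∂P, ‖X n ω‖ ≤ G * ((n : ℝ) + 1) * γ ^ n) :
    (Summable fun n : ℕ => ‖∫ ω, X n ω ∂P‖) ∧
      ∀ N : ℕ,
        ∫ ω, ‖(∑ n ∈ Finset.range N, X n ω) - ∑' n : ℕ, ∫ ω', X n ω' ∂P‖ ∂P ≤
          Real.sqrt d * G / (1 - γ) ^ 2 +
            G * (((N : ℝ) + 1) / (1 - γ) + γ / (1 - γ) ^ 2) * γ ^ N := by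
  have hγ : ‖γ‖ < 1 := by rwa [Real.norm_of_nonneg h0.le]
  set a : ℕ → ℝ := fun n => G * ((n : ℝ) + 1) * γ ^ n
  have ha : HasSum a (G / (1 - γ) ^ 2) := by
    rw [← mul_one_div]
    exact ((hasSum_succ_mul_geometric hγ).mul_left G).congr_fun fun n => mul_assoc _ _ _
  refine ⟨summable_norm_integral ha.summable hbd, fun N => ?_⟩
  have htail : ∑' k, a (k + N) = G * (((N : ℝ) + 1) / (1 - γ) + γ / (1 - γ) ^ 2) * γ ^ N := by
    rw [mul_assoc]
    exact (((hasSum_succ_mul_geometric_nat_add hγ N).mul_left G).congr_fun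
      fun k => mul_assoc _ _ _).tsum_eq
  have hG_le : G ≤ √d * G := le_mul_of_one_le_left hG (Real.one_le_sqrt.2 (by exact_mod_cast hd))
  calc _ ≤ ∑ n ∈ range N, a n + ∑' k, a (k + N) :=
        integral_norm_sum_sub_tsum_integral_le hint ha.summable hbd N
    _ ≤ G / (1 - γ) ^ 2 + ∑' k, a (k + N) := by
        gcongr
        exact sum_le_hasSum _ (fun n _ => by positivity) ha
    _ ≤ _ := by
        rw [htail]
        gcongr
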